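/- arXiv:2504.20396 — 3 statements merged into one kernel-verified Lean document; each statement's English description precedes it below -/
import Mathlib

section
/- Let D : [0,∞) → ℝ be a bounded continuous function whose transition operator Φ(t,s) = exp(∫_s^t D(τ) dτ) satisfies an unstable exponential dichotomy estimate: there exist L ≥ 1 and η > 0 with Φ(t,s) ≥ L⁻¹·exp(η·(t − s)) for all t ≥ s ≥ 0. Then for every bounded continuous function v : [0,∞) → ℝ, the inhomogeneous equation x'(t) = D(t)·x(t) + v(t) has exactly one bounded differentiable solution on [0,∞). -/
/-!
Write `P t = Φ(t,0)`. The difference of two solutions solves `z' = D z`, hence equals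
`z 0 * P t`; the dichotomy makes `P t ≥ L⁻¹ e^{η t}` unbounded, so a bounded difference vanishes.
Conversely, for `s ≥ t ≥ 0` the dichotomy gives `Φ(t,s) ≤ L e^{-η (s - t)}`, so the integral
`x t = -∫_{s > t} Φ(t,s) v s ds` converges, is bounded by `L ‖v‖_∞ / η`, and solves the equation
by variation of constants.
-/

open Filter Set

/-- Transition operator of the scalar linear equation `x' = D t * x`. -/
noncomputable def Phi (D : ℝ → ℝ) (t s : ℝ) : ℝ :=
  Real.exp (∫ τ in s..t, D τ)

/-- Average of `D` over the interval from `q.1` to `q.2`. -/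
noncomputable def bohlAvg (D : ℝ → ℝ) (q : ℝ × ℝ) : ℝ :=
  (q.2 - q.1)⁻¹ * ∫ τ in q.1..q.2, D τ

/-- The filter describing `t - s → +∞` with `t > s ≥ 0` for pairs `q = (s, t)`. -/
def bohlFilter : Filter (ℝ × ℝ) :=
  (Filter.atTop.comap fun q : ℝ × ℝ => q.2 - q.1) ⊓
    Filter.principal {q : ℝ × ℝ | 0 ≤ q.1 ∧ q.1 < q.2}

/-- Upper Bohl exponent of `D`. -/
noncomputable def bohlUpper (D : ℝ → ℝ) : ℝ :=
  Filter.limsup (bohlAvg D) bohlFilter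

/-- Lower Bohl exponent of `D`. -/
noncomputable def bohlLower (D : ℝ → ℝ) : ℝ :=
  Filter.liminf (bohlAvg D) bohlFilter

open MeasureTheory Real

def HasUnstableDichotomy (D : ℝ → ℝ) (L η : ℝ) : Prop :=
  ∀ s t, 0 ≤ s → s ≤ t → L⁻¹ * exp (η * (t - s)) ≤ Phi D t s

section ExpDecay

variable {E : Type*} [NormedAddCommGroup E] {f : ℝ → E} {C η t : ℝ}

lemma exp_neg_mul_sub (η s t : ℝ) : exp (-(η * (s - t))) = exp (η * t) * exp (-η * s) := by
  rw [← exp_add]; ring_nf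

lemma integrableOn_exp_neg_mul_sub_Ioi (hη : 0 < η) (t : ℝ) :
    IntegrableOn (fun s => exp (-(η * (s - t)))) (Ioi t) := by
  simp_rw [exp_neg_mul_sub]
  exact (integrableOn_exp_mul_Ioi (neg_lt_zero.2 hη) t).const_mul (exp (η * t))

lemma integral_exp_neg_mul_sub_Ioi (hη : 0 < η) (t : ℝ) :
    ∫ s in Ioi t, exp (-(η * (s - t))) = η⁻¹ := by
  simp_rw [exp_neg_mul_sub]
  rw [integral_const_mul, integral_exp_mul_Ioi (neg_lt_zero.2 hη), neg_mul, exp_neg]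
  field_simp

lemma integrableOn_Ioi_of_norm_le_exp (hf : AEStronglyMeasurable f (volume.restrict (Ioi t)))
    (hη : 0 < η) (hbound : ∀ s > t, ‖f s‖ ≤ C * exp (-(η * (s - t)))) :
    IntegrableOn f (Ioi t) :=
  ((integrableOn_exp_neg_mul_sub_Ioi hη t).const_mul C).mono' hf
    ((ae_restrict_iff' measurableSet_Ioi).2 (ae_of_all _ hbound))

lemma norm_integral_Ioi_le_of_norm_le_exp [NormedSpace ℝ E] (hη : 0 < η)
    (hbound : ∀ s > t, ‖f s‖ ≤ C * exp (-(η * (s - t)))) :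
    ‖∫ s in Ioi t, f s‖ ≤ C / η := by
  calc ‖∫ s in Ioi t, f s‖ ≤ ∫ s in Ioi t, C * exp (-(η * (s - t))) :=
        norm_integral_le_of_norm_le ((integrableOn_exp_neg_mul_sub_Ioi hη t).const_mul C)
          ((ae_restrict_iff' measurableSet_Ioi).2 (ae_of_all _ hbound))
    _ = C / η := by rw [integral_const_mul, integral_exp_neg_mul_sub_Ioi hη t, div_eq_mul_inv]

end ExpDecay

section TransitionOperator

variable {D D' : ℝ → ℝ} {r s t : ℝ}

lemma Phi_pos : 0 < Phi D t s := exp_pos _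

lemma Phi_self : Phi D t t = 1 := by simp [Phi]

lemma Phi_swap : Phi D s t = (Phi D t s)⁻¹ := by
  rw [Phi, Phi, intervalIntegral.integral_symm, exp_neg]

lemma Phi_mul_Phi (hsr : IntervalIntegrable D volume s r) (hrt : IntervalIntegrable D volume r t) :
    Phi D t r * Phi D r s = Phi D t s := by
  rw [Phi, Phi, Phi, ← exp_add, add_comm, intervalIntegral.integral_add_adjacent_intervals hsr hrt]

lemma Phi_congr (h : EqOn D D' (uIcc s t)) : Phi D t s = Phi D' t s := by
  rw [Phi, Phi, intervalIntegral.integral_congr h]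

lemma hasDerivAt_Phi_left (hD : Continuous D) (s t : ℝ) :
    HasDerivAt (fun t => Phi D t s) (D t * Phi D t s) t :=
  (hD.integral_hasStrictDerivAt s t).hasDerivAt.exp.congr_deriv (mul_comm _ _)

lemma continuous_Phi_left (hD : Continuous D) (s : ℝ) : Continuous fun t => Phi D t s :=
  continuous_iff_continuousAt.2 fun t => (hasDerivAt_Phi_left hD s t).continuousAt

end TransitionOperator

section LinearEquation

variable {D v : ℝ → ℝ} {L η : ℝ}

lemma HasUnstableDichotomy.congr {D' : ℝ → ℝ} (hdich : HasUnstableDichotomy D L η)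
    (h : EqOn D D' (Ici 0)) : HasUnstableDichotomy D' L η := fun s t hs hst =>
  (hdich s t hs hst).trans_eq <| Phi_congr fun τ hτ =>
    h (hs.trans (uIcc_of_le hst ▸ hτ).1 : (0 : ℝ) ≤ τ)

lemma Phi_le_of_hasUnstableDichotomy (hL : 0 < L) (hdich : HasUnstableDichotomy D L η)
    {t s : ℝ} (ht : 0 ≤ t) (hts : t ≤ s) : Phi D t s ≤ L * exp (-(η * (s - t))) := by
  rw [Phi_swap]
  calc (Phi D s t)⁻¹ ≤ (L⁻¹ * exp (η * (s - t)))⁻¹ := inv_anti₀ (by positivity) (hdich t s ht hts)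
    _ = L * exp (-(η * (s - t))) := by rw [mul_inv, inv_inv, exp_neg]

lemma tendsto_Phi_atTop (hL : 0 < L) (hη : 0 < η) (hdich : HasUnstableDichotomy D L η) :
    Tendsto (fun t => Phi D t 0) atTop atTop := by
  refine tendsto_atTop_mono' _ ((eventually_ge_atTop 0).mono fun t ht => hdich 0 t le_rfl ht) ?_
  simpa only [sub_zero, Function.comp_def, id] using
    (tendsto_exp_atTop.comp (tendsto_id.const_mul_atTop hη)).const_mul_atTop (inv_pos.2 hL)

lemma eq_mul_Phi_of_hasDerivAt (hD : Continuous D) {z : ℝ → ℝ}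
    (hz : ∀ t, 0 ≤ t → HasDerivAt z (D t * z t) t) {t : ℝ} (ht : 0 ≤ t) :
    z t = z 0 * Phi D t 0 := by
  have hw : ∀ τ, 0 ≤ τ → HasDerivAt (fun τ => z τ / Phi D τ 0) 0 τ := fun τ hτ =>
    ((hz τ hτ).div (hasDerivAt_Phi_left hD 0 τ) Phi_pos.ne').congr_deriv (by ring)
  have hconst := constant_of_has_deriv_right_zero
    (fun τ hτ => (hw τ hτ.1).continuousAt.continuousWithinAt)
    (fun τ hτ => (hw τ hτ.1).hasDerivWithinAt) t ⟨ht, le_rfl⟩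
  rwa [Phi_self, div_one, div_eq_iff Phi_pos.ne'] at hconst

lemma eq_zero_of_hasDerivAt_of_bounded (hD : Continuous D) (hL : 0 < L) (hη : 0 < η)
    (hdich : HasUnstableDichotomy D L η) {z : ℝ → ℝ}
    (hz : ∀ t, 0 ≤ t → HasDerivAt z (D t * z t) t) (hbdd : ∃ M, ∀ t, 0 ≤ t → |z t| ≤ M)
    {t : ℝ} (ht : 0 ≤ t) : z t = 0 := by
  obtain ⟨M, hM⟩ := hbdd
  suffices hz0 : z 0 = 0 by rw [eq_mul_Phi_of_hasDerivAt hD hz ht, hz0, zero_mul]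
  by_contra hz0
  obtain ⟨T, hMT, hT⟩ := (((tendsto_Phi_atTop hL hη hdich).const_mul_atTop
    (abs_pos.2 hz0)).eventually_gt_atTop M |>.and (eventually_ge_atTop 0)).exists
  have := hM T hT
  rw [eq_mul_Phi_of_hasDerivAt hD hz hT, abs_mul, abs_of_pos Phi_pos] at this
  linarith

lemma hasDerivAt_variation_of_constants (hD : Continuous D) (hv : Continuous v) (c t : ℝ) :
    HasDerivAt (fun t => Phi D t 0 * (c + ∫ s in 0..t, v s / Phi D s 0))
      (D t * (Phi D t 0 * (c + ∫ s in 0..t, v s / Phi D s 0)) + v t) t := by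
  have hg : Continuous fun s => v s / Phi D s 0 :=
    hv.div (continuous_Phi_left hD 0) fun _ => Phi_pos.ne'
  refine ((hasDerivAt_Phi_left hD 0 t).mul
    ((hg.integral_hasStrictDerivAt 0 t).hasDerivAt.const_add c)).congr_deriv ?_
  field_simp [Phi_pos.ne']

lemma exists_bounded_solution (hD : Continuous D) (hv : Continuous v) (hL : 0 < L) (hη : 0 < η)
    (hdich : HasUnstableDichotomy D L η) {M : ℝ} (hM : ∀ t, 0 ≤ t → |v t| ≤ M) :
    ∃ x : ℝ → ℝ, (∀ t, HasDerivAt x (D t * x t + v t) t) ∧ ∀ t, 0 ≤ t → |x t| ≤ L * M / η := by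
  have hdecay : ∀ t, 0 ≤ t → ∀ s > t, ‖Phi D t s * v s‖ ≤ L * M * exp (-(η * (s - t))) :=
    fun t ht s hs => by
      rw [norm_mul, Real.norm_of_nonneg Phi_pos.le, Real.norm_eq_abs, mul_right_comm]
      exact mul_le_mul (Phi_le_of_hasUnstableDichotomy hL hdich ht hs.le) (hM s (ht.trans hs.le))
        (abs_nonneg _) (by positivity)
  have hPhi_div : ∀ t s, Phi D t 0 * (v s / Phi D s 0) = Phi D t s * v s := fun t s => by
    rw [← Phi_mul_Phi (hD.intervalIntegrable 0 s) (hD.intervalIntegrable s t)]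
    field_simp [Phi_pos.ne']
  have hint : IntegrableOn (fun s => v s / Phi D s 0) (Ioi 0) := by
    refine integrableOn_Ioi_of_norm_le_exp
      (hv.div (continuous_Phi_left hD 0) fun _ => Phi_pos.ne').aestronglyMeasurable hη
      (C := L * M) fun s hs => ?_
    have := hdecay 0 le_rfl s hs
    rwa [← hPhi_div, Phi_self, one_mul] at this
  -- The constant makes `x t = -∫ s in Ioi t, Phi D t s * v s` for `t ≥ 0`.
  refine ⟨_, hasDerivAt_variation_of_constants hD hv (-∫ s in Ioi 0, v s / Phi D s 0),
    fun t ht => ?_⟩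
  have htail : (-∫ s in Ioi 0, v s / Phi D s 0) + ∫ s in 0..t, v s / Phi D s 0
      = -∫ s in Ioi t, v s / Phi D s 0 := by
    linarith [intervalIntegral.integral_interval_add_Ioi hint (hint.mono_set (Ioi_subset_Ioi ht))]
  rw [htail, mul_neg, abs_neg, ← integral_const_mul, ← Real.norm_eq_abs]
  simpa only [hPhi_div] using norm_integral_Ioi_le_of_norm_le_exp hη (hdecay t ht)

end LinearEquation

theorem unstable_dichotomy_unique_bounded_solution_general (D : ℝ → ℝ)
    (hD_cont : ContinuousOn D (Set.Ici 0))
    (L η : ℝ) (hL : 1 ≤ L) (hη : 0 < η)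
    (hdich : ∀ s t, 0 ≤ s → s ≤ t → L⁻¹ * Real.exp (η * (t - s)) ≤ Phi D t s)
    (v : ℝ → ℝ) (hv_cont : ContinuousOn v (Set.Ici 0))
    (hv_bdd : ∃ M, ∀ t, 0 ≤ t → |v t| ≤ M) :
    (∃ x : ℝ → ℝ,
      (∀ t, 0 ≤ t → HasDerivAt x (D t * x t + v t) t) ∧
        ∃ M, ∀ t, 0 ≤ t → |x t| ≤ M) ∧
    (∀ x y : ℝ → ℝ,
      ((∀ t, 0 ≤ t → HasDerivAt x (D t * x t + v t) t) ∧ ∃ M, ∀ t, 0 ≤ t → |x t| ≤ M) →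
      ((∀ t, 0 ≤ t → HasDerivAt y (D t * y t + v t) t) ∧ ∃ M, ∀ t, 0 ≤ t → |y t| ≤ M) →
      ∀ t, 0 ≤ t → x t = y t) := by
  obtain ⟨Mv, hMv⟩ := hv_bdd
  have hL0 : 0 < L := one_pos.trans_le hL
  -- Only the values on `[0, ∞)` matter, so extend `D` and `v` continuously to `ℝ` by `D 0`, `v 0`.
  set D' : ℝ → ℝ := fun τ => D (max τ 0)
  set v' : ℝ → ℝ := fun τ => v (max τ 0)
  have hmax : ∀ {τ : ℝ}, 0 ≤ τ → max τ 0 = τ := fun hτ => max_eq_left hτ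
  have hmax_cont : Continuous fun τ : ℝ => max τ 0 := continuous_id.max continuous_const
  have hD' : Continuous D' := hD_cont.comp_continuous hmax_cont fun τ => le_max_right τ 0
  have hv' : Continuous v' := hv_cont.comp_continuous hmax_cont fun τ => le_max_right τ 0
  have hdich' : HasUnstableDichotomy D' L η :=
    HasUnstableDichotomy.congr hdich fun τ hτ => (congrArg D (hmax hτ)).symm
  constructor
  · obtain ⟨x, hx, hx_bdd⟩ := exists_bounded_solution hD' hv' hL0 hη hdich'
      (fun t ht => by simpa only [v', hmax ht] using hMv t ht)
    exact ⟨x, fun t ht => by simpa only [D', v', hmax ht] using hx t, _, hx_bdd⟩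
  · rintro x y ⟨hx, Mx, hMx⟩ ⟨hy, My, hMy⟩ t ht
    refine sub_eq_zero.1 (eq_zero_of_hasDerivAt_of_bounded hD' hL0 hη hdich'
      (fun τ hτ => ((hx τ hτ).sub (hy τ hτ)).congr_deriv ?_) ⟨Mx + My, fun τ hτ => ?_⟩ ht)
    · simp only [D', hmax hτ, Pi.sub_apply]
      ring
    · exact (abs_sub _ _).trans (add_le_add (hMx τ hτ) (hMy τ hτ))

/-- If the transition operator of `x' = D t * x` satisfies an unstable exponential
dichotomy estimate, then for every bounded continuous `v` the inhomogeneous equation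
`x' = D t * x + v t` has exactly one bounded solution on `[0,∞)`. -/
theorem unstable_dichotomy_unique_bounded_solution (D : ℝ → ℝ)
    (hD_cont : ContinuousOn D (Set.Ici 0)) (hD_bdd : ∃ M, ∀ t, 0 ≤ t → |D t| ≤ M)
    (L η : ℝ) (hL : 1 ≤ L) (hη : 0 < η)
    (hdich : ∀ s t, 0 ≤ s → s ≤ t → L⁻¹ * Real.exp (η * (t - s)) ≤ Phi D t s)
    (v : ℝ → ℝ) (hv_cont : ContinuousOn v (Set.Ici 0))
    (hv_bdd : ∃ M, ∀ t, 0 ≤ t → |v t| ≤ M) :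
    (∃ x : ℝ → ℝ,
      (∀ t, 0 ≤ t → HasDerivAt x (D t * x t + v t) t) ∧
        ∃ M, ∀ t, 0 ≤ t → |x t| ≤ M) ∧
    (∀ x y : ℝ → ℝ,
      ((∀ t, 0 ≤ t → HasDerivAt x (D t * x t + v t) t) ∧ ∃ M, ∀ t, 0 ≤ t → |x t| ≤ M) →
      ((∀ t, 0 ≤ t → HasDerivAt y (D t * y t + v t) t) ∧ ∃ M, ∀ t, 0 ≤ t → |y t| ≤ M) →
      ∀ t, 0 ≤ t → x t = y t) :=
  unstable_dichotomy_unique_bounded_solution_general D hD_cont L η hL hη hdich v hv_cont hv_bdd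
end

section
/- Let D : [0,∞) → ℝ be a bounded continuous function with β⁻(D) ≤ 0 ≤ β⁺(D) (so that the linear equation x' = D(t)·x has no exponential dichotomy on [0,∞)), and let v : [0,∞) → ℝ be a bounded continuous function with liminf_{t→+∞} |v(t)| > 0. Then the inhomogeneous equation x'(t) = D(t)·x(t) + v(t) has no bounded solution on [0,∞): every differentiable solution x satisfies sup_{t≥0} |x(t)| = +∞. -/
/-!
Suppose `|x| ≤ K`. As `v` is continuous and `|v|` is eventually bounded away from zero, `v`
eventually has a constant sign; replacing `(x, v)` by `(-x, -v)` we may assume `δ ≤ v` on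
`[T, ∞)`. If `x` becomes positive at some time, the forcing keeps it above some `c > 0`
afterwards. Otherwise `-x ≥ 0`, and `-x` also stays above some `c > 0`: below a small level the
equation would drive it below zero in finite time. In both cases `z = ±x` takes values in
`[c, K]` and `(log z - ∫ D)' = ±v / z` with `v / z ≥ δ / K`, so `∫ₛᵗ D` is at most
`log (K / c) - δ / K * (t - s)`, respectively at least `δ / K * (t - s) - log (K / c)`.
Hence `β⁺(D) < 0` or `β⁻(D) > 0`.
-/

open Filter Set

open Real

section Calculus

theorem image_le_of_hasDerivAt_lt_deriv_boundary {f f' B B' : ℝ → ℝ} {a : ℝ}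
    (hf : ∀ t, a ≤ t → HasDerivAt f (f' t) t) (hB : ∀ t, HasDerivAt B (B' t) t)
    (ha : f a ≤ B a) (hbound : ∀ t, a ≤ t → f t = B t → f' t < B' t) :
    ∀ t, a ≤ t → f t ≤ B t := fun _ ht =>
  image_le_of_deriv_right_lt_deriv_boundary
    (fun u hu => (hf u hu.1).continuousAt.continuousWithinAt)
    (fun u hu => (hf u hu.1).hasDerivWithinAt) ha hB
    (fun u hu => hbound u hu.1) ⟨ht, le_rfl⟩

theorem mul_sub_le_image_sub_of_le_hasDerivAt {f f' : ℝ → ℝ} {s t C : ℝ} (hst : s ≤ t)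
    (hf : ∀ u ∈ Icc s t, HasDerivAt f (f' u) u) (hC : ∀ u ∈ Icc s t, C ≤ f' u) :
    C * (t - s) ≤ f t - f s := by
  refine (convex_Icc s t).mul_sub_le_image_sub_of_le_deriv
    (fun u hu => (hf u hu).continuousAt.continuousWithinAt)
    (fun u hu => (hf u (interior_subset hu)).differentiableAt.differentiableWithinAt)
    (fun u hu => ?_) s ⟨le_rfl, hst⟩ t ⟨hst, le_rfl⟩ hst
  rw [(hf u (interior_subset hu)).deriv]
  exact hC u (interior_subset hu)

theorem abs_integral_le_of_abs_le {D : ℝ → ℝ} {M a b : ℝ} (hM : ∀ t, 0 ≤ t → |D t| ≤ M)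
    (ha : 0 ≤ a) (hb : 0 ≤ b) : |∫ τ in a..b, D τ| ≤ M * |b - a| :=
  Real.norm_eq_abs _ ▸ intervalIntegral.norm_integral_le_of_norm_le_const fun t ht =>
    hM t ((le_min ha hb).trans (uIoc_subset_uIcc ht).1)

theorem ContinuousOn.intervalIntegrable_of_Ici {D : ℝ → ℝ} (hD : ContinuousOn D (Ici 0))
    {a b : ℝ} (ha : 0 ≤ a) (hb : 0 ≤ b) : IntervalIntegrable D MeasureTheory.volume a b :=
  (hD.mono fun _ ht => (le_min ha hb).trans ht.1).intervalIntegrable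

end Calculus

section Bohl

instance bohlFilter_neBot : bohlFilter.NeBot := by
  refine Tendsto.neBot (f := fun t : ℝ => ((0 : ℝ), t)) (x := atTop) (tendsto_inf.2 ⟨?_, ?_⟩)
  · exact tendsto_comap_iff.2 (tendsto_id.congr fun t => (sub_zero t).symm)
  · exact tendsto_principal.2 ((eventually_gt_atTop 0).mono fun t ht => ⟨le_rfl, ht⟩)

theorem eventually_bohlFilter {P : ℝ × ℝ → Prop} (L : ℝ)
    (h : ∀ s t, 0 ≤ s → s < t → L ≤ t - s → P (s, t)) : ∀ᶠ q in bohlFilter, P q := by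
  filter_upwards [mem_inf_of_left (preimage_mem_comap (Ici_mem_atTop L)),
    mem_inf_of_right (mem_principal_self _)] with q hL hq
  exact h q.1 q.2 hq.1 hq.2 hL

variable {D : ℝ → ℝ} {M : ℝ}

theorem eventually_abs_bohlAvg_le (hM : ∀ t, 0 ≤ t → |D t| ≤ M) :
    ∀ᶠ q in bohlFilter, |bohlAvg D q| ≤ M := by
  refine eventually_bohlFilter 0 fun s t hs hst _ => ?_
  have hpos : 0 < t - s := sub_pos.2 hst
  have hint := abs_integral_le_of_abs_le hM hs (hs.trans hst.le)
  rw [abs_of_pos hpos] at hint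
  rw [bohlAvg, abs_mul, abs_inv, abs_of_pos hpos, inv_mul_le_iff₀ hpos, mul_comm]
  exact hint

theorem eventually_bohlAvg_le_of_integral_le (hD : ContinuousOn D (Ici 0))
    (hM : ∀ t, 0 ≤ t → |D t| ≤ M) {C α T : ℝ} (hα : 0 < α) (hT : 0 ≤ T)
    (hC : ∀ s t, T ≤ s → s ≤ t → ∫ τ in s..t, D τ ≤ C - α * (t - s)) :
    ∀ᶠ q in bohlFilter, bohlAvg D q ≤ -(α / 2) := by
  have hM0 : 0 ≤ M := (abs_nonneg _).trans (hM 0 le_rfl)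
  -- Move the endpoints into `[T, ∞)`; this costs at most `M * T` at each end.
  have hext : ∀ s t, 0 ≤ s → s ≤ t →
      ∫ τ in s..t, D τ ≤ C + (2 * M + α) * T - α * (t - s) := by
    intro s t hs hst
    have ht : 0 ≤ t := hs.trans hst
    have hs' : 0 ≤ max s T := hs.trans (le_max_left _ _)
    have ht' : 0 ≤ max t T := ht.trans (le_max_left _ _)
    rw [← intervalIntegral.integral_add_adjacent_intervals
        (hD.intervalIntegrable_of_Ici hs hs') (hD.intervalIntegrable_of_Ici hs' ht),
      ← intervalIntegral.integral_add_adjacent_intervals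
        (hD.intervalIntegrable_of_Ici hs' ht') (hD.intervalIntegrable_of_Ici ht' ht)]
    have hleft := (le_abs_self _).trans (abs_integral_le_of_abs_le hM hs hs')
    have hright := (le_abs_self _).trans (abs_integral_le_of_abs_le hM ht' ht)
    have hmid := hC (max s T) (max t T) (le_max_right _ _) (max_le_max_right T hst)
    rw [abs_of_nonneg (by simp)] at hleft
    rw [abs_of_nonpos (by simp)] at hright
    have h1 : max s T - s ≤ T := sub_le_iff_le_add.2 (max_le (by linarith) (by linarith))
    have h2 : max t T - t ≤ T := sub_le_iff_le_add.2 (max_le (by linarith) (by linarith))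
    nlinarith [le_max_left t T, le_max_left s T]
  set C' := C + (2 * M + α) * T
  refine eventually_bohlFilter (2 * C' / α) fun s t hs hst hL => ?_
  have hpos : 0 < t - s := sub_pos.2 hst
  have hC' : C' ≤ α / 2 * (t - s) := by
    rw [div_le_iff₀ hα] at hL; linarith
  rw [bohlAvg, inv_mul_le_iff₀ hpos]
  linarith [hext s t hs hst.le]

theorem bohlUpper_neg_of_integral_le (hD : ContinuousOn D (Ici 0))
    (hM : ∀ t, 0 ≤ t → |D t| ≤ M) {C α T : ℝ} (hα : 0 < α) (hT : 0 ≤ T)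
    (hC : ∀ s t, T ≤ s → s ≤ t → ∫ τ in s..t, D τ ≤ C - α * (t - s)) :
    bohlUpper D < 0 := by
  have hbdd : ∀ᶠ q in bohlFilter, -M ≤ bohlAvg D q :=
    (eventually_abs_bohlAvg_le hM).mono fun _ h => (abs_le.1 h).1
  have := limsup_le_of_le (isCoboundedUnder_le_of_eventually_le _ hbdd)
    (eventually_bohlAvg_le_of_integral_le hD hM hα hT hC)
  exact this.trans_lt (by linarith)

theorem bohlLower_pos_of_le_integral (hD : ContinuousOn D (Ici 0))
    (hM : ∀ t, 0 ≤ t → |D t| ≤ M) {C α T : ℝ} (hα : 0 < α) (hT : 0 ≤ T)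
    (hC : ∀ s t, T ≤ s → s ≤ t → α * (t - s) - C ≤ ∫ τ in s..t, D τ) :
    0 < bohlLower D := by
  have hbdd : ∀ᶠ q in bohlFilter, bohlAvg D q ≤ M :=
    (eventually_abs_bohlAvg_le hM).mono fun _ h => (abs_le.1 h).2
  have hneg := eventually_bohlAvg_le_of_integral_le (D := fun t => -D t) (C := C) hD.neg
    (by simpa using hM) hα hT fun s t hs hst => by
      rw [intervalIntegral.integral_neg]; linarith [hC s t hs hst]
  have hev : ∀ᶠ q in bohlFilter, α / 2 ≤ bohlAvg D q := hneg.mono fun q hq => by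
    simp only [bohlAvg, intervalIntegral.integral_neg, mul_neg] at hq
    rw [bohlAvg]; linarith
  exact (half_pos hα).trans_le (le_liminf_of_le (isCoboundedUnder_ge_of_eventually_le _ hbdd) hev)

end Bohl

section LinearEquation

variable {D w x : ℝ → ℝ} {a M δ : ℝ}

theorem exists_pos_le_of_pos_solution (hM : ∀ t, a ≤ t → |D t| ≤ M)
    (hx : ∀ t, a ≤ t → HasDerivAt x (D t * x t + w t) t) (hw : ∀ t, a ≤ t → δ ≤ w t)
    (hδ : 0 < δ) (hxa : 0 < x a) : ∃ c > 0, ∀ t, a ≤ t → c ≤ x t := by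
  have hM0 : 0 ≤ M := (abs_nonneg _).trans (hM a le_rfl)
  set c := min (x a) (δ / (M + 1))
  have hc : 0 < c := lt_min hxa (by positivity)
  have hMc : M * c < δ := by
    calc M * c ≤ M * (δ / (M + 1)) := mul_le_mul_of_nonneg_left (min_le_right _ _) hM0
      _ < δ := by rw [mul_div_assoc', div_lt_iff₀ (by linarith)]; nlinarith
  refine ⟨c, hc, fun t ht => neg_le_neg_iff.1 (image_le_of_hasDerivAt_lt_deriv_boundary
    (fun u hu => (hx u hu).neg) (fun _ => hasDerivAt_const _ (-c))
    (neg_le_neg (min_le_left _ _)) (fun u hu hxu => ?_) t ht)⟩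
  have hDu : -M ≤ D u := (abs_le.1 (hM u hu)).1
  have hxc : x u = c := neg_injective hxu
  rw [hxc]
  nlinarith [hw u hu]

theorem exists_pos_le_of_nonneg_solution (hM : ∀ t, a ≤ t → |D t| ≤ M)
    (hx : ∀ t, a ≤ t → HasDerivAt x (D t * x t + w t) t) (hw : ∀ t, a ≤ t → w t ≤ -δ)
    (hδ : 0 < δ) (hx0 : ∀ t, a ≤ t → 0 ≤ x t) : ∃ c > 0, ∀ t, a ≤ t → c ≤ x t := by
  have hM0 : 0 ≤ M := (abs_nonneg _).trans (hM a le_rfl)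
  set c := δ / (2 * (M + 1))
  have hc : 0 < c := by positivity
  have hMc : M * c < δ / 2 := by
    rw [mul_div_assoc', div_lt_div_iff₀ (by positivity) two_pos]; nlinarith
  refine ⟨c, hc, fun t₀ ht₀ => ?_⟩
  by_contra! hsmall
  -- Below level `c` the equation forces `x' < -δ / 2`, so `x` would reach zero.
  have hdecay := image_le_of_hasDerivAt_lt_deriv_boundary (a := t₀) (f := x)
    (B := fun t => x t₀ - δ / 2 * (t - t₀)) (fun u hu => hx u (ht₀.trans hu))
    (fun u => ((hasDerivAt_id u).sub_const t₀ |>.const_mul (δ / 2)).const_sub (x t₀))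
    (by simp) (fun u hu hxu => ?_)
  · have hgap : 0 < 2 * c / δ := by positivity
    have hdrop := hdecay (t₀ + 2 * c / δ) (by linarith)
    have hδc : δ / 2 * (2 * c / δ) = c := by field_simp
    rw [add_sub_cancel_left, hδc] at hdrop
    linarith [hx0 (t₀ + 2 * c / δ) (by linarith)]
  · have hau : a ≤ u := ht₀.trans hu
    have hxu' : x u ≤ c := by
      rw [hxu]; nlinarith [hδ, sub_nonneg.2 hu]
    have hDx : D u * x u ≤ M * c :=
      calc D u * x u ≤ M * x u :=
            mul_le_mul_of_nonneg_right ((le_abs_self _).trans (hM u hau)) (hx0 u hau)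
        _ ≤ M * c := mul_le_mul_of_nonneg_left hxu' hM0
    simp only [mul_one]
    linarith [hw u hau]

theorem hasDerivAt_log_sub_integral (hD : ContinuousOn D (Ioi 0)) {s u : ℝ} (hs : 0 < s)
    (hu : 0 < u) (hxu : 0 < x u) (hx : HasDerivAt x (D u * x u + w u) u) :
    HasDerivAt (fun t => log (x t) - ∫ τ in s..t, D τ) (w u / x u) u := by
  have hint : HasDerivAt (fun t => ∫ τ in s..t, D τ) (D u) u :=
    intervalIntegral.integral_hasDerivAt_right
      (hD.mono fun _ ht => lt_of_lt_of_le (lt_min hs hu) ht.1).intervalIntegrable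
      (hD.stronglyMeasurableAtFilter isOpen_Ioi u hu) (hD.continuousAt (Ioi_mem_nhds hu))
  refine ((hx.log hxu.ne').sub hint).congr_deriv ?_
  field_simp
  ring

variable {c K : ℝ}

theorem integral_le_of_pos_bounded_solution (hD : ContinuousOn D (Ioi 0)) (ha : 0 < a)
    (hx : ∀ t, a ≤ t → HasDerivAt x (D t * x t + w t) t) (hw : ∀ t, a ≤ t → δ ≤ w t)
    (hδ : 0 ≤ δ) (hc : 0 < c) (hxc : ∀ t, a ≤ t → c ≤ x t) (hxK : ∀ t, a ≤ t → x t ≤ K)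
    {s t : ℝ} (hs : a ≤ s) (hst : s ≤ t) :
    ∫ τ in s..t, D τ ≤ (log K - log c) - δ / K * (t - s) := by
  have hau : ∀ u ∈ Icc s t, a ≤ u := fun u hu => hs.trans hu.1
  have hgrowth := mul_sub_le_image_sub_of_le_hasDerivAt (C := δ / K) hst
    (fun u hu => hasDerivAt_log_sub_integral hD (ha.trans_le hs) (ha.trans_le (hau u hu))
      (hc.trans_le (hxc u (hau u hu))) (hx u (hau u hu)))
    (fun u hu => div_le_div₀ (hδ.trans (hw u (hau u hu))) (hw u (hau u hu))
      (hc.trans_le (hxc u (hau u hu))) (hxK u (hau u hu)))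
  have hlogs : log c ≤ log (x s) := log_le_log hc (hxc s hs)
  have hlogt : log (x t) ≤ log K :=
    log_le_log (hc.trans_le (hxc t (hs.trans hst))) (hxK t (hs.trans hst))
  rw [intervalIntegral.integral_same, sub_zero] at hgrowth
  linarith

theorem le_integral_of_pos_bounded_solution (hD : ContinuousOn D (Ioi 0)) (ha : 0 < a)
    (hx : ∀ t, a ≤ t → HasDerivAt x (D t * x t + w t) t) (hw : ∀ t, a ≤ t → w t ≤ -δ)
    (hδ : 0 ≤ δ) (hc : 0 < c) (hxc : ∀ t, a ≤ t → c ≤ x t) (hxK : ∀ t, a ≤ t → x t ≤ K)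
    {s t : ℝ} (hs : a ≤ s) (hst : s ≤ t) :
    δ / K * (t - s) - (log K - log c) ≤ ∫ τ in s..t, D τ := by
  have hau : ∀ u ∈ Icc s t, a ≤ u := fun u hu => hs.trans hu.1
  have hdecay := mul_sub_le_image_sub_of_le_hasDerivAt (C := δ / K) hst
    (fun u hu => (hasDerivAt_log_sub_integral hD (ha.trans_le hs) (ha.trans_le (hau u hu))
      (hc.trans_le (hxc u (hau u hu))) (hx u (hau u hu))).neg)
    (fun u hu => by
      rw [← neg_div]
      exact div_le_div₀ (hδ.trans (le_neg.2 (hw u (hau u hu)))) (le_neg.2 (hw u (hau u hu)))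
        (hc.trans_le (hxc u (hau u hu))) (hxK u (hau u hu)))
  have hlogs : log (x s) ≤ log K := log_le_log (hc.trans_le (hxc s hs)) (hxK s hs)
  have hlogt : log c ≤ log (x t) := log_le_log hc (hxc t (hs.trans hst))
  simp only [Pi.neg_apply, intervalIntegral.integral_same, sub_zero] at hdecay
  linarith

end LinearEquation

theorem exists_forall_le_or_forall_le_neg {v : ℝ → ℝ} (hv : ContinuousOn v (Ici 0))
    (hinf : 0 < liminf (fun t => |v t|) atTop) :
    ∃ δ > 0, ∃ T > 0, (∀ t, T ≤ t → δ ≤ v t) ∨ (∀ t, T ≤ t → δ ≤ -v t) := by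
  obtain ⟨δ, hδ, hδv⟩ := exists_between hinf
  obtain ⟨T₀, hT₀⟩ := eventually_atTop.1 (eventually_lt_of_lt_liminf hδv
    (isBoundedUnder_of ⟨0, fun t => abs_nonneg (v t)⟩))
  set T := max T₀ 1
  have hT : 0 < T := zero_lt_one.trans_le (le_max_right _ _)
  have habs : ∀ t, T ≤ t → δ < |v t| := fun t ht => hT₀ t ((le_max_left _ _).trans ht)
  have hcross : ∀ t₁ t₂, T ≤ t₁ → T ≤ t₂ → v t₁ ≤ 0 → 0 ≤ v t₂ → False := by
    intro t₁ t₂ h₁ h₂ hv₁ hv₂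
    obtain ⟨t, ht, hvt⟩ := isPreconnected_Ici.intermediate_value₂ (a := t₁) (b := t₂) h₁ h₂
      (hv.mono (Ici_subset_Ici.2 hT.le)) continuousOn_const hv₁ hv₂
    have := habs t ht
    rw [hvt, abs_zero] at this
    linarith
  refine ⟨δ, hδ, T, hT, ?_⟩
  rcases le_or_gt (v T) 0 with hvT | hvT
  · refine Or.inr fun t ht => ?_
    have hneg : v t < 0 := lt_of_not_ge fun h => hcross T t le_rfl ht hvT h
    exact (abs_of_neg hneg ▸ habs t ht).le
  · refine Or.inl fun t ht => ?_
    have hpos : 0 < v t := lt_of_not_ge fun h => hcross t T ht le_rfl h hvT.le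
    exact (abs_of_pos hpos ▸ habs t ht).le

theorem bohlUpper_neg_or_bohlLower_pos_of_bounded_solution {D v x : ℝ → ℝ} {M K δ T : ℝ}
    (hD : ContinuousOn D (Ici 0)) (hM : ∀ t, 0 ≤ t → |D t| ≤ M)
    (hx : ∀ t, 0 ≤ t → HasDerivAt x (D t * x t + v t) t) (hK : ∀ t, 0 ≤ t → |x t| ≤ K)
    (hδ : 0 < δ) (hT : 0 < T) (hv : ∀ t, T ≤ t → δ ≤ v t) :
    bohlUpper D < 0 ∨ 0 < bohlLower D := by
  have hD' : ContinuousOn D (Ioi 0) := hD.mono Ioi_subset_Ici_self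
  by_cases hpos : ∃ t₁, T ≤ t₁ ∧ 0 < x t₁
  · obtain ⟨t₁, hTt₁, hxt₁⟩ := hpos
    have ht₁ : 0 < t₁ := hT.trans_le hTt₁
    have hnonneg : ∀ t, t₁ ≤ t → 0 ≤ t := fun t ht => ht₁.le.trans ht
    obtain ⟨c, hc, hxc⟩ := exists_pos_le_of_pos_solution (fun t ht => hM t (hnonneg t ht))
      (fun t ht => hx t (hnonneg t ht)) (fun t ht => hv t (hTt₁.trans ht)) hδ hxt₁
    have hxK : ∀ t, t₁ ≤ t → x t ≤ K := fun t ht => (le_abs_self _).trans (hK t (hnonneg t ht))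
    have hK0 : 0 < K := hc.trans_le ((hxc t₁ le_rfl).trans (hxK t₁ le_rfl))
    exact Or.inl <| bohlUpper_neg_of_integral_le hD hM (div_pos hδ hK0) ht₁.le
      fun s t hs hst => integral_le_of_pos_bounded_solution hD' ht₁ (fun t ht => hx t (hnonneg t ht))
        (fun t ht => hv t (hTt₁.trans ht)) hδ.le hc hxc hxK hs hst
  · push Not at hpos
    have hnonneg : ∀ t, T ≤ t → 0 ≤ t := fun t ht => hT.le.trans ht
    have hy : ∀ t, T ≤ t → HasDerivAt (fun u => -x u) (D t * -x t + -v t) t :=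
      fun t ht => (hx t (hnonneg t ht)).neg.congr_deriv (by ring)
    have hw : ∀ t, T ≤ t → -v t ≤ -δ := fun t ht => neg_le_neg (hv t ht)
    obtain ⟨c, hc, hyc⟩ := exists_pos_le_of_nonneg_solution (fun t ht => hM t (hnonneg t ht))
      hy hw hδ fun t ht => neg_nonneg.2 (hpos t ht)
    have hyK : ∀ t, T ≤ t → -x t ≤ K := fun t ht => (neg_le_abs _).trans (hK t (hnonneg t ht))
    have hK0 : 0 < K := hc.trans_le ((hyc T le_rfl).trans (hyK T le_rfl))
    exact Or.inr <| bohlLower_pos_of_le_integral hD hM (div_pos hδ hK0) hT.le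
      fun s t hs hst => le_integral_of_pos_bounded_solution hD' hT hy hw hδ.le hc hyc hyK hs hst

theorem no_dichotomy_no_bounded_solution_general (D : ℝ → ℝ)
    (hD_cont : ContinuousOn D (Set.Ici 0)) (hD_bdd : ∃ M, ∀ t, 0 ≤ t → |D t| ≤ M)
    (h1 : bohlLower D ≤ 0) (h2 : 0 ≤ bohlUpper D)
    (v : ℝ → ℝ) (hv_cont : ContinuousOn v (Set.Ici 0))
    (hv_inf : 0 < Filter.liminf (fun t => |v t|) Filter.atTop)
    (x : ℝ → ℝ) (hx : ∀ t, 0 ≤ t → HasDerivAt x (D t * x t + v t) t) :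
    ∀ M : ℝ, ∃ t, 0 ≤ t ∧ M < |x t| := by
  by_contra! hbdd
  obtain ⟨K, hK⟩ := hbdd
  obtain ⟨M, hM⟩ := hD_bdd
  obtain ⟨δ, hδ, T, hT, hv | hv⟩ := exists_forall_le_or_forall_le_neg hv_cont hv_inf
  · rcases bohlUpper_neg_or_bohlLower_pos_of_bounded_solution hD_cont hM hx hK hδ hT hv
      with h | h <;> linarith
  · have hx' : ∀ t, 0 ≤ t → HasDerivAt (fun u => -x u) (D t * -x t + -v t) t :=
      fun t ht => (hx t ht).neg.congr_deriv (by ring)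
    rcases bohlUpper_neg_or_bohlLower_pos_of_bounded_solution hD_cont hM hx'
      (by simpa only [abs_neg] using hK) hδ hT hv with h | h <;> linarith

/-- If `0 ∈ [β⁻(D), β⁺(D)]` (no exponential dichotomy) and `liminf |v t| > 0`, then
the inhomogeneous equation `x' = D t * x + v t` has no bounded solution on `[0,∞)`. -/
theorem no_dichotomy_no_bounded_solution (D : ℝ → ℝ)
    (hD_cont : ContinuousOn D (Set.Ici 0)) (hD_bdd : ∃ M, ∀ t, 0 ≤ t → |D t| ≤ M)
    (h1 : bohlLower D ≤ 0) (h2 : 0 ≤ bohlUpper D)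
    (v : ℝ → ℝ) (hv_cont : ContinuousOn v (Set.Ici 0))
    (hv_bdd : ∃ M, ∀ t, 0 ≤ t → |v t| ≤ M)
    (hv_inf : 0 < Filter.liminf (fun t => |v t|) Filter.atTop)
    (x : ℝ → ℝ) (hx : ∀ t, 0 ≤ t → HasDerivAt x (D t * x t + v t) t) :
    ∀ M : ℝ, ∃ t, 0 ≤ t ∧ M < |x t| :=
  no_dichotomy_no_bounded_solution_general D hD_cont hD_bdd h1 h2 v hv_cont hv_inf x hx
end

section
/- Consider the time-varying Levins model with rescue effect, p'(t) = c(t)·p(t)·(1 − p(t)) − e(t)·p(t)·(1 − p(t)), where c, e : [0,∞) → ℝ are bounded continuous functions with c(t) > 0 and e(t) ≥ 0 for all t ≥ 0; set D(t) = e(t) − c(t) and Φ(t,s) = exp(∫_s^t D(τ) dτ). Then every differentiable solution p : [0,∞) → ℝ with p(0) ∈ (0,1) satisfies p(t) ∈ (0,1) for all t ≥ 0 and the exact formula 1/p(t) = 1 + Φ(t,0)·(1/p(0) − 1) for all t ≥ 0. Consequently: if β⁺(D) < 0, then there exist K ≥ 1 and α > 0 with 1 − p(t) ≤ K·(1/p(0)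 − 1)·exp(−α·t) for all t ≥ 0 (the fraction of occupied patches converges exponentially to 1). -/
open Filter Set

/-!
With `C = 1 / p 0 - 1` and `A t = ∫₀ᵗ D`, the function `h = 1 - p (1 + C e^A)` satisfies the
linear equation `h' = D p h` with `h 0 = 0`, so Grönwall's inequality forces `h = 0`. This is the
exact formula `p (1 + C Φ(t,0)) = 1`, and `C > 0` puts `p t` in `(0,1)`. If `β⁺(D) < 0`, the
averages of `D` over long intervals are eventually below `-α < 0`, while on short intervals they
are controlled by the bound on `D`; hence `Φ(t,s) ≤ K e^{-α(t-s)}` and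
`1 - p t = p t · C Φ(t,0) ≤ K C e^{-α t}`.
-/

open Real

theorem eq_zero_of_hasDerivAt_smul_self {E : Type*} [NormedAddCommGroup E] [NormedSpace ℝ E]
    {f : ℝ → E} {k : ℝ → ℝ} {a b : ℝ} (hk : ContinuousOn k (Icc a b))
    (hf : ∀ t ∈ Icc a b, HasDerivAt f (k t • f t) t) (ha : f a = 0) :
    ∀ t ∈ Icc a b, f t = 0 := by
  obtain ⟨K, hK⟩ := isCompact_Icc.exists_bound_of_continuousOn hk
  refine eq_zero_of_abs_deriv_le_mul_abs_self_of_eq_zero_right (K := K)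
    (fun t ht => (hf t ht).continuousAt.continuousWithinAt)
    (fun t ht => (hf t (Ico_subset_Icc_self ht)).hasDerivWithinAt) ha fun t ht => ?_
  rw [norm_smul]
  exact mul_le_mul_of_nonneg_right (hK t (Ico_subset_Icc_self ht)) (norm_nonneg _)

theorem exists_hasDerivAt_eq_integral_of_continuousOn_Ici {f : ℝ → ℝ} {a : ℝ}
    (hf : ContinuousOn f (Ici a)) :
    ∃ F : ℝ → ℝ, ∀ t, a ≤ t → HasDerivAt F (f t) t ∧ F t = ∫ τ in a..t, f τ := by
  -- the two-sided derivative at `a` sees `f` left of `a`, so extend `f` there by `f a`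
  have hg : Continuous fun τ => f (max τ a) :=
    hf.comp_continuous (continuous_id.max continuous_const) fun τ => le_max_right τ a
  refine ⟨fun t => ∫ τ in a..t, f (max τ a), fun t ht => ⟨?_, ?_⟩⟩
  · simpa only [max_eq_left ht] using (hg.integral_hasStrictDerivAt a t).hasDerivAt
  · refine intervalIntegral.integral_congr fun τ hτ => ?_
    rw [uIcc_of_le ht] at hτ
    simp only [max_eq_left hτ.1]

theorem mul_one_add_Phi_mul_eq_one {D p : ℝ → ℝ} (hD : ContinuousOn D (Ici 0))
    (hp : ∀ t, 0 ≤ t → HasDerivAt p (-D t * p t * (1 - p t)) t) (hp0 : p 0 ≠ 0) :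
    ∀ t, 0 ≤ t → p t * (1 + Phi D t 0 * (1 / p 0 - 1)) = 1 := by
  obtain ⟨A, hA⟩ := exists_hasDerivAt_eq_integral_of_continuousOn_Ici hD
  set C := 1 / p 0 - 1
  have hA0 : A 0 = 0 := by rw [(hA 0 le_rfl).2, intervalIntegral.integral_same]
  have hlinear : ∀ t, 0 ≤ t → HasDerivAt (fun s => 1 - p s * (1 + exp (A s) * C))
      ((D t * p t) • (1 - p t * (1 + exp (A t) * C))) t := fun t ht =>
    (((hp t ht).mul ((((hA t ht).1.exp).mul_const C).const_add 1)).const_sub 1).congr_deriv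
      (by simp only [smul_eq_mul]; ring)
  have hp_cont : ContinuousOn p (Ici 0) := fun t ht => (hp t ht).continuousAt.continuousWithinAt
  intro t ht
  have hzero := eq_zero_of_hasDerivAt_smul_self ((hD.mul hp_cont).mono Icc_subset_Ici_self)
    (fun s hs => hlinear s hs.1) (by simp only [hA0, exp_zero, one_mul, C]; field_simp; ring)
    t ⟨ht, le_rfl⟩
  rw [Phi, ← (hA t ht).2]
  linarith

theorem integral_le_mul_of_abs_le {D : ℝ → ℝ} {M s t : ℝ} (hM : ∀ τ, 0 ≤ τ → |D τ| ≤ M)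
    (hs : 0 ≤ s) (hst : s ≤ t) : ∫ τ in s..t, D τ ≤ M * (t - s) := by
  have h := intervalIntegral.norm_integral_le_of_norm_le_const (a := s) (b := t) (C := M)
    fun τ hτ => (Real.norm_eq_abs (D τ)).trans_le (hM τ (hs.trans (uIoc_of_le hst ▸ hτ).1.le))
  rw [abs_of_nonneg (sub_nonneg.2 hst)] at h
  exact (le_abs_self _).trans h

theorem isBoundedUnder_le_bohlAvg {D : ℝ → ℝ} {M : ℝ} (hM : ∀ τ, 0 ≤ τ → |D τ| ≤ M) :
    IsBoundedUnder (· ≤ ·) bohlFilter (bohlAvg D) := by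
  refine ⟨M, eventually_map.2 ?_⟩
  filter_upwards [mem_inf_of_right (mem_principal_self _)] with q ⟨hq1, hq2⟩
  rw [bohlAvg, inv_mul_le_iff₀ (sub_pos.2 hq2), mul_comm]
  exact integral_le_mul_of_abs_le hM hq1 hq2.le

theorem exists_integral_le_of_bohlUpper_lt {D : ℝ → ℝ} {M β : ℝ}
    (hM : ∀ τ, 0 ≤ τ → |D τ| ≤ M) (hβ : bohlUpper D < β) :
    ∃ T, ∀ s t, 0 ≤ s → T ≤ t - s → ∫ τ in s..t, D τ ≤ β * (t - s) := by
  have hev := eventually_lt_of_limsup_lt hβ (isBoundedUnder_le_bohlAvg hM)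
  rw [bohlFilter, eventually_inf_principal, eventually_comap, eventually_atTop] at hev
  obtain ⟨T, hT⟩ := hev
  refine ⟨max T 1, fun s t hs hlong => ?_⟩
  have hst : 0 < t - s := lt_of_lt_of_le one_pos ((le_max_right T 1).trans hlong)
  have havg := hT (t - s) ((le_max_left T 1).trans hlong) (s, t) rfl ⟨hs, sub_pos.1 hst⟩
  rw [bohlAvg, inv_mul_lt_iff₀ hst] at havg
  linarith

theorem exists_Phi_le_of_bohlUpper_neg {D : ℝ → ℝ} {M : ℝ} (hM : ∀ τ, 0 ≤ τ → |D τ| ≤ M)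
    (hβ : bohlUpper D < 0) :
    ∃ K α : ℝ, 1 ≤ K ∧ 0 < α ∧
      ∀ s t, 0 ≤ s → s ≤ t → Phi D t s ≤ K * exp (-α * (t - s)) := by
  set α := -bohlUpper D / 2 with hα_def
  have hα : 0 < α := by rw [hα_def]; linarith
  obtain ⟨T, hT⟩ := exists_integral_le_of_bohlUpper_lt hM (show bohlUpper D < -α by rw [hα_def]; linarith)
  have hMα : 0 ≤ M + α := by linarith [(abs_nonneg _).trans (hM 0 le_rfl)]
  have hK : 0 ≤ (M + α) * max T 0 := mul_nonneg hMα (le_max_right T 0)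
  refine ⟨exp ((M + α) * max T 0), α, one_le_exp hK, hα, fun s t hs hst => ?_⟩
  rw [Phi, ← exp_add, exp_le_exp]
  rcases le_total T (t - s) with hlong | hshort
  · linarith [hT s t hs hlong]
  · have hshort' : (M + α) * (t - s) ≤ (M + α) * max T 0 :=
      mul_le_mul_of_nonneg_left (hshort.trans (le_max_left T 0)) hMα
    linarith [integral_le_mul_of_abs_le hM hs hst]

theorem rescue_effect_model_general (c e : ℝ → ℝ)
    (hc_cont : ContinuousOn c (Set.Ici 0)) (he_cont : ContinuousOn e (Set.Ici 0))
    (hc_bdd : ∃ M, ∀ t, 0 ≤ t → |c t| ≤ M) (he_bdd : ∃ M, ∀ t, 0 ≤ t → |e t| ≤ M)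
    (D : ℝ → ℝ) (hD : ∀ t, D t = e t - c t)
    (p : ℝ → ℝ)
    (hp : ∀ t, 0 ≤ t → HasDerivAt p (c t * p t * (1 - p t) - e t * p t * (1 - p t)) t)
    (hp0 : p 0 ∈ Set.Ioo (0 : ℝ) 1) :
    (∀ t, 0 ≤ t → p t ∈ Set.Ioo (0 : ℝ) 1) ∧
    (∀ t, 0 ≤ t → 1 / p t = 1 + Phi D t 0 * (1 / p 0 - 1)) ∧
    (bohlUpper D < 0 →
      ∃ K α : ℝ, 1 ≤ K ∧ 0 < α ∧
        ∀ t, 0 ≤ t → 1 - p t ≤ K * (1 / p 0 - 1) * Real.exp (-α * t)) := by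
  obtain ⟨hp0_pos, hp0_lt⟩ := hp0
  have hD_cont : ContinuousOn D (Ici 0) := by
    rw [show D = e - c from funext hD]
    exact he_cont.sub hc_cont
  have hformula := mul_one_add_Phi_mul_eq_one hD_cont
    (fun t ht => (hp t ht).congr_deriv (by rw [hD]; ring)) hp0_pos.ne'
  have hC : 0 < 1 / p 0 - 1 := by rw [sub_pos, lt_div_iff₀ hp0_pos, one_mul]; exact hp0_lt
  have hmem : ∀ t, 0 ≤ t → p t ∈ Ioo 0 1 := fun t ht => by
    have hgrowth : 0 < Phi D t 0 * (1 / p 0 - 1) := mul_pos (exp_pos _) hC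
    constructor <;> nlinarith [hformula t ht]
  refine ⟨hmem, fun t ht => ?_, fun hβ => ?_⟩
  · rw [eq_comm, eq_div_iff (hmem t ht).1.ne']
    exact (mul_comm _ _).trans (hformula t ht)
  obtain ⟨Mc, hMc⟩ := hc_bdd
  obtain ⟨Me, hMe⟩ := he_bdd
  have hD_bdd : ∀ t, 0 ≤ t → |D t| ≤ Me + Mc := fun t ht =>
    hD t ▸ (abs_sub _ _).trans (add_le_add (hMe t ht) (hMc t ht))
  obtain ⟨K, α, hK, hα, hPhi⟩ := exists_Phi_le_of_bohlUpper_neg hD_bdd hβ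
  refine ⟨K, α, hK, hα, fun t ht => ?_⟩
  have hdecay := hPhi 0 t le_rfl ht
  rw [sub_zero] at hdecay
  calc 1 - p t = p t * (Phi D t 0 * (1 / p 0 - 1)) := by linarith [hformula t ht]
    _ ≤ Phi D t 0 * (1 / p 0 - 1) :=
        mul_le_of_le_one_left (mul_pos (exp_pos _) hC).le (hmem t ht).2.le
    _ ≤ K * exp (-α * t) * (1 / p 0 - 1) := mul_le_mul_of_nonneg_right hdecay hC.le
    _ = K * (1 / p 0 - 1) * exp (-α * t) := by ring

/-- Rescue-effect model `p' = c t * p * (1 - p) - e t * p * (1 - p)`: the interval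
`(0,1)` is invariant, the exact formula `1 / p t = 1 + Φ(t,0) (1 / p 0 - 1)` holds,
and if `β⁺(e - c) < 0` the occupied fraction converges exponentially to `1`. -/
theorem rescue_effect_model (c e : ℝ → ℝ)
    (hc_cont : ContinuousOn c (Set.Ici 0)) (he_cont : ContinuousOn e (Set.Ici 0))
    (hc_bdd : ∃ M, ∀ t, 0 ≤ t → |c t| ≤ M) (he_bdd : ∃ M, ∀ t, 0 ≤ t → |e t| ≤ M)
    (hc_pos : ∀ t, 0 ≤ t → 0 < c t) (he_nonneg : ∀ t, 0 ≤ t → 0 ≤ e t)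
    (D : ℝ → ℝ) (hD : ∀ t, D t = e t - c t)
    (p : ℝ → ℝ)
    (hp : ∀ t, 0 ≤ t → HasDerivAt p (c t * p t * (1 - p t) - e t * p t * (1 - p t)) t)
    (hp0 : p 0 ∈ Set.Ioo (0 : ℝ) 1) :
    (∀ t, 0 ≤ t → p t ∈ Set.Ioo (0 : ℝ) 1) ∧
    (∀ t, 0 ≤ t → 1 / p t = 1 + Phi D t 0 * (1 / p 0 - 1)) ∧
    (bohlUpper D < 0 →
      ∃ K α : ℝ, 1 ≤ K ∧ 0 < α ∧
        ∀ t, 0 ≤ t → 1 - p t ≤ K * (1 / p 0 - 1) * Real.exp (-α * t)) :=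
  rescue_effect_model_general c e hc_cont he_cont hc_bdd he_bdd D hD p hp hp0
end
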